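/- (Summed two-endpoint trace estimate on a family of edges.) Let E be a countable index set, ℓ₀ > 0, and ℓ : E → ℝ with ℓ_e ≥ ℓ₀ for all e ∈ E. For each e ∈ E let f_e : ℝ → ℂ be continuous on [0, ℓ_e], differentiable on (0, ℓ_e), and such that both f_e and its derivative f_e' are square-integrable on (0, ℓ_e). Then Σ_{e ∈ E} ( |f_e(0)|² + |f_e(ℓ_e)|² ) ≤ coth(ℓ₀/2) · Σ_{e ∈ E} ( ∫₀^{ℓ_e} |f_e'(s)|² ds + ∫₀^{ℓ_e} |f_e(s)|² ds ), where both sums are taken in [0, ∞]. -/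

import Mathlib

/-!
If a weight `ρ` satisfies the Riccati inequality `ρ² ≤ 1 + ρ'`, then `-(ρ ‖f‖²)' ≤ ‖f'‖² + ‖f‖²`,
because the cross term `2ρ⟪f, f'⟫` is absorbed by `ρ² ‖f‖² + ‖f'‖²`. On `[0, L]` the weight
`ρ s = tanh (L/2 - s)` solves the Riccati equation and equals `± tanh (L/2)` at the endpoints, so
integrating gives `tanh (L/2) (‖f 0‖² + ‖f L‖²) ≤ ∫₀ᴸ ‖f'‖² + ‖f‖²`. As `tanh` is increasing,
`tanh (L/2) ≥ tanh (ℓ₀/2) = coth (ℓ₀/2)⁻¹` for `L ≥ ℓ₀`, and the edge estimates add up.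
-/

open MeasureTheory Set Real

theorem Real.hasDerivAt_tanh (x : ℝ) : HasDerivAt tanh (1 - tanh x ^ 2) x := by
  have h := (hasDerivAt_sinh x).div (hasDerivAt_cosh x) (cosh_pos x).ne'
  rw [show sinh / cosh = tanh from funext fun y => (tanh_eq_sinh_div_cosh y).symm] at h
  refine h.congr_deriv ?_
  rw [tanh_eq_sinh_div_cosh]
  field_simp

theorem Real.strictMono_tanh : StrictMono tanh :=
  strictMono_of_hasDerivAt_pos hasDerivAt_tanh fun x =>
    sub_pos.2 (sq_lt_one_iff_abs_lt_one _ |>.2 (abs_lt.2 (tanh_bijOn.mapsTo (mem_univ x))))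

theorem neg_deriv_weighted_sq_le {r r' x y c : ℝ} (hr : r ^ 2 ≤ 1 + r') (hc : |c| ≤ x * y) :
    -(r' * x ^ 2 + r * (2 * c)) ≤ y ^ 2 + x ^ 2 := by
  obtain ⟨hc₁, hc₂⟩ := abs_le.mp hc
  have hcross : -(2 * r * c) ≤ r ^ 2 * x ^ 2 + y ^ 2 := by
    rcases le_total 0 r with h | h
    · nlinarith [sq_nonneg (r * x - y), mul_nonneg h (by linarith : 0 ≤ c + x * y)]
    · nlinarith [sq_nonneg (r * x + y),
        mul_nonneg (neg_nonneg.2 h) (by linarith : 0 ≤ x * y - c)]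
  nlinarith [mul_le_mul_of_nonneg_right hr (sq_nonneg x)]

theorem weighted_trace_le {F : Type*} [NormedAddCommGroup F] [InnerProductSpace ℝ F]
    {a b : ℝ} (hab : a ≤ b) {ρ ρ' : ℝ → ℝ} {f f' : ℝ → F}
    (hρc : ContinuousOn ρ (Icc a b)) (hρ : ∀ s ∈ Ioo a b, HasDerivAt ρ (ρ' s) s)
    (hriccati : ∀ s ∈ Ioo a b, ρ s ^ 2 ≤ 1 + ρ' s)
    (hfc : ContinuousOn f (Icc a b)) (hf : ∀ s ∈ Ioo a b, HasDerivAt f (f' s) s)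
    (hint : IntegrableOn (fun s => ‖f' s‖ ^ 2 + ‖f s‖ ^ 2) (Ioo a b)) :
    ρ a * ‖f a‖ ^ 2 - ρ b * ‖f b‖ ^ 2 ≤ ∫ s in Ioo a b, (‖f' s‖ ^ 2 + ‖f s‖ ^ 2) := by
  have key := intervalIntegral.sub_le_integral_of_hasDeriv_right_of_le hab
    (g := fun s => -(ρ s * ‖f s‖ ^ 2))
    (hρc.mul (hfc.norm.pow 2)).neg
    (fun s hs => ((hρ s hs).mul (hf s hs).norm_sq).neg.hasDerivWithinAt)
    ((integrableOn_Icc_iff_integrableOn_Ioo).2 hint)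
    (fun s hs => neg_deriv_weighted_sq_le (hriccati s hs) (abs_real_inner_le_norm _ _))
  rw [intervalIntegral.integral_of_le hab, integral_Ioc_eq_integral_Ioo] at key
  linarith

theorem tanh_mul_trace_le {F : Type*} [NormedAddCommGroup F] [InnerProductSpace ℝ F]
    {L : ℝ} (hL : 0 ≤ L) {f f' : ℝ → F}
    (hfc : ContinuousOn f (Icc 0 L)) (hf : ∀ s ∈ Ioo 0 L, HasDerivAt f (f' s) s)
    (hint : IntegrableOn (fun s => ‖f' s‖ ^ 2 + ‖f s‖ ^ 2) (Ioo 0 L)) :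
    tanh (L / 2) * (‖f 0‖ ^ 2 + ‖f L‖ ^ 2) ≤ ∫ s in Ioo 0 L, (‖f' s‖ ^ 2 + ‖f s‖ ^ 2) := by
  have hρ (s : ℝ) : HasDerivAt (fun t => tanh (L / 2 - t)) (-(1 - tanh (L / 2 - s) ^ 2)) s :=
    (hasDerivAt_tanh _).comp_const_sub (L / 2) s
  have := weighted_trace_le hL (fun s _ => (hρ s).continuousAt.continuousWithinAt)
    (fun s _ => hρ s) (fun s _ => by linarith) hfc hf hint
  simp only [sub_zero, show L / 2 - L = -(L / 2) by ring, tanh_neg] at this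
  linarith

theorem ofReal_integral_norm_sq_eq_lintegral_enorm_sq {α E : Type*} [MeasurableSpace α]
    {μ : Measure α} [NormedAddCommGroup E] {f : α → E} (hf : MemLp f 2 μ) :
    ENNReal.ofReal (∫ x, ‖f x‖ ^ 2 ∂μ) = ∫⁻ x, ‖f x‖ₑ ^ 2 ∂μ := by
  simpa [enorm_pow] using
    ofReal_integral_norm_eq_lintegral_enorm (hf.integrable_norm_pow two_ne_zero)

theorem enorm_sq_add_enorm_sq_le_coth_mul {F : Type*} [NormedAddCommGroup F]
    [InnerProductSpace ℝ F] {ℓ₀ L : ℝ} (hℓ₀ : 0 < ℓ₀) (hL : ℓ₀ ≤ L) {f f' : ℝ → F}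
    (hfc : ContinuousOn f (Icc 0 L)) (hf : ∀ s ∈ Ioo 0 L, HasDerivAt f (f' s) s)
    (hf2 : MemLp f 2 (volume.restrict (Ioo 0 L)))
    (hf'2 : MemLp f' 2 (volume.restrict (Ioo 0 L))) :
    ‖f 0‖ₑ ^ 2 + ‖f L‖ₑ ^ 2 ≤ ENNReal.ofReal (cosh (ℓ₀ / 2) / sinh (ℓ₀ / 2)) *
      ((∫⁻ s in Ioo 0 L, ‖f' s‖ₑ ^ 2) + ∫⁻ s in Ioo 0 L, ‖f s‖ₑ ^ 2) := by
  have hf2' := hf2.integrable_norm_pow two_ne_zero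
  have hf'2' := hf'2.integrable_norm_pow two_ne_zero
  have htanh : 0 < tanh (ℓ₀ / 2) := tanh_zero ▸ strictMono_tanh (by positivity)
  have hreal : ‖f 0‖ ^ 2 + ‖f L‖ ^ 2
      ≤ (tanh (ℓ₀ / 2))⁻¹ * ∫ s in Ioo 0 L, (‖f' s‖ ^ 2 + ‖f s‖ ^ 2) := by
    rw [inv_mul_eq_div, le_div_iff₀' htanh]
    calc tanh (ℓ₀ / 2) * (‖f 0‖ ^ 2 + ‖f L‖ ^ 2)
        ≤ tanh (L / 2) * (‖f 0‖ ^ 2 + ‖f L‖ ^ 2) := by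
          gcongr
          exact strictMono_tanh.monotone (by linarith)
      _ ≤ _ := tanh_mul_trace_le (by linarith) hfc hf (hf'2'.add hf2')
  calc ‖f 0‖ₑ ^ 2 + ‖f L‖ₑ ^ 2 = ENNReal.ofReal (‖f 0‖ ^ 2 + ‖f L‖ ^ 2) := by
        rw [ENNReal.ofReal_add (by positivity) (by positivity),
          ENNReal.ofReal_pow (norm_nonneg _), ENNReal.ofReal_pow (norm_nonneg _),
          ofReal_norm, ofReal_norm]
    _ ≤ _ := ENNReal.ofReal_le_ofReal hreal
    _ = _ := by
      rw [ENNReal.ofReal_mul (by positivity), integral_add hf'2' hf2',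
        ENNReal.ofReal_add (by positivity) (by positivity),
        ofReal_integral_norm_sq_eq_lintegral_enorm_sq hf2,
        ofReal_integral_norm_sq_eq_lintegral_enorm_sq hf'2, tanh_eq_sinh_div_cosh, inv_div]

theorem summed_trace_estimate_edges_general
    {E : Type*}
    {ℓ₀ : ℝ} (hℓ₀ : 0 < ℓ₀) (ℓ : E → ℝ) (hℓ : ∀ e, ℓ₀ ≤ ℓ e)
    (f f' : E → ℝ → ℂ)
    (hcont : ∀ e, ContinuousOn (f e) (Set.Icc 0 (ℓ e)))
    (hderiv : ∀ e, ∀ s ∈ Set.Ioo 0 (ℓ e), HasDerivAt (f e) (f' e s) s)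
    (hf2 : ∀ e, MemLp (f e) 2 (volume.restrict (Set.Ioo 0 (ℓ e))))
    (hf'2 : ∀ e, MemLp (f' e) 2 (volume.restrict (Set.Ioo 0 (ℓ e)))) :
    (∑' e : E, ((‖f e 0‖₊ : ENNReal) ^ 2 + (‖f e (ℓ e)‖₊ : ENNReal) ^ 2))
      ≤ ENNReal.ofReal (Real.cosh (ℓ₀ / 2) / Real.sinh (ℓ₀ / 2)) *
        ∑' e : E, ((∫⁻ s in Set.Ioo 0 (ℓ e), (‖f' e s‖₊ : ENNReal) ^ 2)
          + ∫⁻ s in Set.Ioo 0 (ℓ e), (‖f e s‖₊ : ENNReal) ^ 2) := by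
  rw [← ENNReal.tsum_mul_left]
  refine ENNReal.tsum_le_tsum fun e => ?_
  simpa only [enorm_eq_nnnorm] using enorm_sq_add_enorm_sq_le_coth_mul hℓ₀ (hℓ e) (hcont e)
    (hderiv e) (hf2 e) (hf'2 e)

/-- Summed two-endpoint trace estimate on a family of edges with lengths bounded below by
`ℓ₀ > 0`: `Σ_e (|f_e(0)|² + |f_e(ℓ_e)|²) ≤ coth(ℓ₀/2) Σ_e (‖f_e'‖²_{L²} + ‖f_e‖²_{L²})`,
with both sums taken in `[0, ∞]`. -/
theorem summed_trace_estimate_edges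
    {E : Type*} [Countable E]
    {ℓ₀ : ℝ} (hℓ₀ : 0 < ℓ₀) (ℓ : E → ℝ) (hℓ : ∀ e, ℓ₀ ≤ ℓ e)
    (f f' : E → ℝ → ℂ)
    (hcont : ∀ e, ContinuousOn (f e) (Set.Icc 0 (ℓ e)))
    (hderiv : ∀ e, ∀ s ∈ Set.Ioo 0 (ℓ e), HasDerivAt (f e) (f' e s) s)
    (hf2 : ∀ e, MemLp (f e) 2 (volume.restrict (Set.Ioo 0 (ℓ e))))
    (hf'2 : ∀ e, MemLp (f' e) 2 (volume.restrict (Set.Ioo 0 (ℓ e)))) :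
    (∑' e : E, ((‖f e 0‖₊ : ENNReal) ^ 2 + (‖f e (ℓ e)‖₊ : ENNReal) ^ 2))
      ≤ ENNReal.ofReal (Real.cosh (ℓ₀ / 2) / Real.sinh (ℓ₀ / 2)) *
        ∑' e : E, ((∫⁻ s in Set.Ioo 0 (ℓ e), (‖f' e s‖₊ : ENNReal) ^ 2)
          + ∫⁻ s in Set.Ioo 0 (ℓ e), (‖f e s‖₊ : ENNReal) ^ 2) :=
  summed_trace_estimate_edges_general hℓ₀ ℓ hℓ f f' hcont hderiv hf2 hf'2
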